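/- Let A = XP_N(p|x|z) be an XP operator with x binary and x ≠ 0 (so A is non-diagonal). Then there exists a positive integer m with A^m a scalar multiple of the identity, every such m is even, and the least such m equals 2 * d₂, where d₂ is the least positive integer with (A^2)^(d₂) a scalar multiple of the identity (note A^2 is a diagonal XP operator). -/

import Mathlib

/-!
Up to the phase `ω^p`, `A = XP_N(p|x|z)` is the tensor product of the one-qubit operators
`X^(x i) P^(z i)`, and each of their squares is diagonal with powers of `ω` on the diagonal
(`X P^z X P^z = ω^(2z) I`). Hence `A²` is a diagonal matrix of `2N`-th roots of unity and
`A^(4N) = 1`. Since `x ≠ 0`, `A` is not diagonal; but if some odd power `A^(2k+1)` were scalar,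
then `A = (A²)^((2N-1)k) A^(2k+1)` would be diagonal. So the scalar powers of `A` are the
`A^(2k)` with `(A²)^k` scalar.
-/

open Matrix

/-- `ω = exp(πi/N)`. -/
noncomputable def omN (N : ℕ) : ℂ := Complex.exp (Real.pi * Complex.I / N)

/-- The Pauli X matrix. -/
def Xm : Matrix (Fin 2) (Fin 2) ℂ := !![0, 1; 1, 0]

/-- The precision-`N` phase matrix `P = diag(1, ω²)`. -/
noncomputable def Pm (N : ℕ) : Matrix (Fin 2) (Fin 2) ℂ := !![1, 0; 0, (omN N) ^ 2]

/-- The precision-`N` XP operator `XP_N(p|x|z)` on `n` qubits, the matrix indexed by bit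
strings whose `(f, e)` entry is `ω^p * ∏ i, (X^(x i) * P^(z i)) (f i) (e i)`. -/
noncomputable def XP (N n : ℕ) (p : ℤ) (x z : Fin n → ℤ) :
    Matrix (Fin n → Fin 2) (Fin n → Fin 2) ℂ :=
  Matrix.of fun f e => (omN N) ^ p * ∏ i, ((Xm ^ (x i)) * (Pm N) ^ (z i)) (f i) (e i)

/-- The antisymmetric operator `D_N(z) = XP_N(∑ i, z i | 0 | -z)`. -/
noncomputable def DN (N n : ℕ) (z : Fin n → ℤ) :
    Matrix (Fin n → Fin 2) (Fin n → Fin 2) ℂ :=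
  XP N n (∑ i, z i) 0 (-z)

/-- A vector is binary if every entry is 0 or 1. -/
def IsBinary {n : ℕ} (x : Fin n → ℤ) : Prop := ∀ i, x i = 0 ∨ x i = 1

theorem Submonoid.mem_of_pow_two_mem_of_pow_odd_mem {M : Type*} [Monoid M] {S : Submonoid M}
    {a : M} {j k : ℕ} (hj : 0 < j) (ha : a ^ (2 * j) = 1) (h2 : a ^ 2 ∈ S)
    (hodd : a ^ (2 * k + 1) ∈ S) : a ∈ S := by
  obtain ⟨i, rfl⟩ := Nat.exists_eq_add_one_of_ne_zero hj.ne'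
  have key : a = (a ^ 2) ^ (i * k) * a ^ (2 * k + 1) := calc
    a = (a ^ (2 * (i + 1))) ^ k * a := by rw [ha, one_pow, one_mul]
    _ = (a ^ 2) ^ (i * k) * a ^ (2 * k + 1) := by
      rw [← pow_mul, ← pow_mul, ← pow_succ, ← pow_add]
      ring_nf
  exact key ▸ S.mul_mem (S.pow_mem h2 _) hodd

theorem Nat.isLeast_two_mul_of_even {P : ℕ → Prop} (heven : ∀ m, 0 < m → P m → Even m) {d : ℕ}
    (hd : IsLeast {k | 0 < k ∧ P (2 * k)} d) : IsLeast {m | 0 < m ∧ P m} (2 * d) := by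
  refine ⟨⟨by linarith [hd.1.1], hd.1.2⟩, ?_⟩
  rintro m ⟨hm, hPm⟩
  obtain ⟨k, rfl⟩ := heven m hm hPm
  have : d ≤ k := hd.2 ⟨by omega, by rwa [two_mul]⟩
  omega

namespace Matrix

variable {ι κ R : Type*}

theorem even_of_pow_eq_smul_one [Fintype κ] [DecidableEq κ] [CommSemiring R]
    {A : Matrix κ κ R} {j m : ℕ} {c : R} (hj : 0 < j) (hA : A ^ (2 * j) = 1)
    (hA2 : (A ^ 2).IsDiag) (hnd : ¬ A.IsDiag) (hm : A ^ m = c • 1) : Even m := by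
  by_contra hodd
  obtain ⟨k, rfl⟩ := Nat.not_even_iff_odd.mp hodd
  let S := MonoidHom.mrange (diagonalRingHom κ R)
  have hS : ∀ B : Matrix κ κ R, B.IsDiag → B ∈ S := fun B hB => ⟨B.diag, hB.diagonal_diag⟩
  obtain ⟨d, hd⟩ : A ∈ S := Submonoid.mem_of_pow_two_mem_of_pow_odd_mem hj hA (hS _ hA2)
    (hS _ (hm ▸ isDiag_smul_one κ c))
  exact hnd (hd ▸ isDiag_diagonal d)

theorem diagonal_zpow [Fintype κ] [DecidableEq κ] [Field R] (v : κ → R) (hv : ∀ i, v i ≠ 0)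
    (k : ℤ) : diagonal v ^ k = diagonal (v ^ k) := by
  cases k with
  | ofNat m => simp [diagonal_pow]
  | negSucc m =>
    have hu : IsUnit (v ^ (m + 1)) := Pi.isUnit_iff.mpr fun i => (pow_ne_zero _ (hv i)).isUnit
    rw [zpow_negSucc, zpow_negSucc, diagonal_pow, inv_diagonal]
    congr 1
    funext i
    exact eq_inv_of_mul_eq_one_right (congrFun (Ring.mul_inverse_cancel _ hu) i)

variable [Fintype ι] [CommSemiring R]

def piKron (M : ι → Matrix κ κ R) : Matrix (ι → κ) (ι → κ) R :=
  of fun f e => ∏ i, M i (f i) (e i)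

theorem piKron_mul [DecidableEq ι] [Fintype κ] (M N : ι → Matrix κ κ R) :
    piKron M * piKron N = piKron fun i => M i * N i := by
  ext f e
  simp only [piKron, mul_apply, of_apply, Fintype.prod_sum, Finset.prod_mul_distrib]

theorem piKron_diagonal [DecidableEq κ] (d : ι → κ → R) :
    piKron (fun i => diagonal (d i)) = diagonal fun e => ∏ i, d i (e i) := by
  ext f e
  by_cases hfe : f = e
  · subst hfe
    simp [piKron]
  · obtain ⟨i, hi⟩ := Function.ne_iff.mp hfe
    simp only [piKron, of_apply, diagonal_apply_ne _ hfe]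
    exact Finset.prod_eq_zero (Finset.mem_univ i) (diagonal_apply_ne _ hi)

end Matrix

section XPOperators

variable {N n : ℕ}

theorem omN_ne_zero : omN N ≠ 0 := Complex.exp_ne_zero _

theorem omN_pow_two_mul (hN : N ≠ 0) : omN N ^ (2 * N) = 1 := by
  rw [omN, ← Complex.exp_nat_mul, ← Complex.exp_two_pi_mul_I]
  congr 1
  field_simp
  push_cast
  ring

theorem omN_zpow_pow_two_mul (hN : N ≠ 0) (k : ℤ) : (omN N ^ k) ^ (2 * N) = 1 := by
  rw [← zpow_natCast, ← _root_.zpow_mul, mul_comm, _root_.zpow_mul, zpow_natCast,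
    omN_pow_two_mul hN, _root_.one_zpow]

theorem Pm_eq_diagonal : Pm N = diagonal ![1, omN N ^ 2] := by
  ext i j
  fin_cases i <;> fin_cases j <;> rfl

theorem Pm_zpow (k : ℤ) : Pm N ^ k = diagonal ![1, omN N ^ (2 * k)] := by
  rw [Pm_eq_diagonal, diagonal_zpow _ (fun a => by fin_cases a <;> simp [omN_ne_zero])]
  congr 1
  funext a
  fin_cases a
  · simp
  · simp only [Pi.pow_apply, Fin.mk_one, cons_val_one, cons_val_zero, _root_.zpow_mul]
    norm_cast

theorem XPm_sq_eq_diagonal {b : ℤ} (hb : b = 0 ∨ b = 1) (z : ℤ) :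
    ∃ t : Fin 2 → ℤ, (Xm ^ b * Pm N ^ z) ^ 2 = diagonal fun a => omN N ^ t a := by
  rcases hb with rfl | rfl
  · refine ⟨![0, 4 * z], ?_⟩
    rw [zpow_zero, one_mul, Pm_zpow, diagonal_pow]
    congr 1
    funext a
    fin_cases a
    · simp
    · simp only [Pi.pow_apply, Fin.mk_one, cons_val_one, cons_val_zero, ← zpow_natCast,
        ← _root_.zpow_mul]
      ring_nf
  · refine ⟨fun _ => 2 * z, ?_⟩
    ext i j
    fin_cases i <;> fin_cases j <;>
      simp [Pm_zpow, Xm, sq, mul_apply, Fin.sum_univ_two, vecMul_diagonal]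

theorem XPm_apply_zero {b : ℤ} (hb : b = 0 ∨ b = 1) (z : ℤ) :
    (Xm ^ b * Pm N ^ z) (if b = 0 then 0 else 1) 0 = 1 := by
  rcases hb with rfl | rfl <;> simp [Pm_zpow, Xm, mul_apply, diagonal_apply]

theorem XP_eq_smul_piKron (p : ℤ) (x z : Fin n → ℤ) :
    XP N n p x z = omN N ^ p • piKron fun i => Xm ^ x i * Pm N ^ z i := by
  ext f e
  rfl

theorem XP_sq_eq_diagonal (hN : N ≠ 0) (p : ℤ) {x : Fin n → ℤ} (hx : IsBinary x)
    (z : Fin n → ℤ) : ∃ d, XP N n p x z ^ 2 = diagonal d ∧ ∀ e, d e ^ (2 * N) = 1 := by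
  choose t ht using fun i => XPm_sq_eq_diagonal (N := N) (hx i) (z i)
  refine ⟨fun e => (omN N ^ p) ^ 2 * ∏ i, omN N ^ t i (e i), ?_, fun e => ?_⟩
  · rw [XP_eq_smul_piKron, smul_pow, sq (piKron _), piKron_mul]
    simp only [← sq, ht, piKron_diagonal, ← diagonal_smul]
    rfl
  · rw [mul_pow, pow_right_comm, ← zpow_natCast, ← Finset.prod_pow]
    simp [omN_zpow_pow_two_mul hN]

theorem XP_pow_four_mul (hN : N ≠ 0) (p : ℤ) {x : Fin n → ℤ} (hx : IsBinary x)
    (z : Fin n → ℤ) : XP N n p x z ^ (2 * (2 * N)) = 1 := by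
  obtain ⟨d, hA2, hd⟩ := XP_sq_eq_diagonal hN p hx z
  rw [pow_mul, hA2, diagonal_pow, ← diagonal_one]
  exact congrArg diagonal (funext hd)

theorem XP_not_isDiag (p : ℤ) {x : Fin n → ℤ} (hx : IsBinary x) (hx0 : x ≠ 0)
    (z : Fin n → ℤ) : ¬ (XP N n p x z).IsDiag := by
  -- column `0` of `XP` has its nonzero entry in the row of the bit string `x`
  let f : Fin n → Fin 2 := fun i => if x i = 0 then 0 else 1
  have hf : f ≠ 0 := by
    obtain ⟨i, hi⟩ := Function.ne_iff.mp hx0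
    exact Function.ne_iff.mpr ⟨i, by simpa [f] using hi⟩
  intro hdiag
  have hentry : XP N n p x z f 0 = omN N ^ p := by
    simp only [XP, of_apply, Pi.zero_apply, f, XPm_apply_zero (hx _), Finset.prod_const_one,
      mul_one]
  have hzero : XP N n p x z f 0 = 0 := hdiag hf
  exact zpow_ne_zero p omN_ne_zero (hentry ▸ hzero)

end XPOperators

theorem XP_nondiag_degree_general (N n : ℕ) (hN : 2 ≤ N) (p : ℤ) (x z : Fin n → ℤ)
    (hx : IsBinary x) (hx0 : x ≠ 0) :
    (∃ m : ℕ, 0 < m ∧ ∃ c : ℂ,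
        (XP N n p x z) ^ m = c • (1 : Matrix (Fin n → Fin 2) (Fin n → Fin 2) ℂ)) ∧
      (∀ m : ℕ, 0 < m →
        (∃ c : ℂ, (XP N n p x z) ^ m = c • (1 : Matrix (Fin n → Fin 2) (Fin n → Fin 2) ℂ)) →
        Even m) ∧
      (∀ d₂ : ℕ,
        IsLeast {m : ℕ | 0 < m ∧ ∃ c : ℂ,
          ((XP N n p x z) ^ 2) ^ m = c • (1 : Matrix (Fin n → Fin 2) (Fin n → Fin 2) ℂ)} d₂ →
        IsLeast {m : ℕ | 0 < m ∧ ∃ c : ℂ,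
          (XP N n p x z) ^ m = c • (1 : Matrix (Fin n → Fin 2) (Fin n → Fin 2) ℂ)} (2 * d₂)) := by
  have hN0 : N ≠ 0 := by omega
  obtain ⟨d, hA2, -⟩ := XP_sq_eq_diagonal hN0 p hx z
  have hfin := XP_pow_four_mul hN0 p hx z
  have heven : ∀ m : ℕ, 0 < m →
      (∃ c : ℂ, XP N n p x z ^ m = c • (1 : Matrix (Fin n → Fin 2) (Fin n → Fin 2) ℂ)) →
      Even m := fun m _ ⟨c, hc⟩ =>
    even_of_pow_eq_smul_one (by omega) hfin (hA2 ▸ isDiag_diagonal d)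
      (XP_not_isDiag p hx hx0 z) hc
  refine ⟨⟨2 * (2 * N), by omega, 1, by rw [hfin, one_smul]⟩, heven, fun d₂ hd₂ => ?_⟩
  exact Nat.isLeast_two_mul_of_even heven (by simpa only [← pow_mul] using hd₂)

/-- **Degree of a non-diagonal XP operator**: for `A = XP_N(p|x|z)` with `x` binary and
nonzero, some positive power of `A` is a scalar multiple of the identity, every such power is
even, and the least one equals `2 d₂` where `d₂` is the least positive integer with `(A²)^(d₂)`
a scalar multiple of the identity. -/
theorem XP_nondiag_degree (N n : ℕ) (hN : 2 ≤ N) (hn : 1 ≤ n) (p : ℤ) (x z : Fin n → ℤ)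
    (hx : IsBinary x) (hx0 : x ≠ 0) :
    (∃ m : ℕ, 0 < m ∧ ∃ c : ℂ,
        (XP N n p x z) ^ m = c • (1 : Matrix (Fin n → Fin 2) (Fin n → Fin 2) ℂ)) ∧
      (∀ m : ℕ, 0 < m →
        (∃ c : ℂ, (XP N n p x z) ^ m = c • (1 : Matrix (Fin n → Fin 2) (Fin n → Fin 2) ℂ)) →
        Even m) ∧
      (∀ d₂ : ℕ,
        IsLeast {m : ℕ | 0 < m ∧ ∃ c : ℂ,
          ((XP N n p x z) ^ 2) ^ m = c • (1 : Matrix (Fin n → Fin 2) (Fin n → Fin 2) ℂ)} d₂ →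
        IsLeast {m : ℕ | 0 < m ∧ ∃ c : ℂ,
          (XP N n p x z) ^ m = c • (1 : Matrix (Fin n → Fin 2) (Fin n → Fin 2) ℂ)} (2 * d₂)) :=
  XP_nondiag_degree_general N n hN p x z hx hx0
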